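/- Let B be a nonzero m×n complex matrix, let ‖·‖ be a unitarily invariant norm on the space of complex m×n matrices, and let H₁ be an m×m Hermitian matrix and H₂ an n×n Hermitian matrix. Then the function h(t) = log ‖e^{tH₁} B e^{tH₂}‖ is convex on ℝ. -/

import Mathlib

open Matrix

/-- The matrix exponential of a square complex matrix. -/
noncomputable def mexp {k : ℕ} (A : Matrix (Fin k) (Fin k) ℂ) : Matrix (Fin k) (Fin k) ℂ :=
  NormedSpace.exp A

/-- `N` is a unitarily invariant matrix norm on `m × n` complex matrices:
it is a norm and satisfies `N (U * A * V) = N A` for all unitary `U`, `V`. -/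
structure IsUnitarilyInvariantNorm (m n : ℕ) (N : Matrix (Fin m) (Fin n) ℂ → ℝ) : Prop where
  eq_zero_iff : ∀ A, N A = 0 ↔ A = 0
  smul : ∀ (c : ℂ) (A), N (c • A) = ‖c‖ * N A
  triangle : ∀ A B, N (A + B) ≤ N A + N B
  unitary_inv : ∀ (U : Matrix (Fin m) (Fin m) ℂ) (V : Matrix (Fin n) (Fin n) ℂ),
    U ∈ Matrix.unitaryGroup (Fin m) ℂ → V ∈ Matrix.unitaryGroup (Fin n) ℂ →
    ∀ A, N (U * A * V) = N A

/-!
For `z ∈ ℂ` put `F z = e^{z H₁} B e^{z H₂}`, an entire function with values in the matrices normed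
by `N`. For Hermitian `H` the matrices `e^{i y H}` are unitary, so by unitary invariance
`‖F (x + i y)‖ = ‖F x‖`: the norm of `F` depends on `re z` only. Hadamard's three-lines theorem on
the strip between `re z = s` and `re z = t` then gives
`‖F ((1 - b) s + b t)‖ ≤ ‖F s‖ ^ (1 - b) ‖F t‖ ^ b`, which is the convexity of `log ‖F‖` on `ℝ`;
`F` does not vanish there since exponentials are invertible.
-/

open Complex Complex.HadamardThreeLines NormedSpace Set

section ThreeLines

variable {E : Type*} [NormedAddCommGroup E] [NormedSpace ℂ E]

theorem norm_le_rpow_mul_rpow_of_norm_eq_norm_re {F : ℂ → E} (hF : Differentiable ℂ F)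
    (hre : ∀ z : ℂ, ‖F z‖ = ‖F z.re‖) (s t : ℝ) {b : ℝ} (hb₀ : 0 ≤ b) (hb₁ : b ≤ 1) :
    ‖F ↑((1 - b) * s + b * t)‖ ≤ ‖F s‖ ^ (1 - b) * ‖F t‖ ^ b := by
  -- `‖G z‖` depends on `re z` only, so it is bounded on the strip by compactness of `[0, 1]`.
  set G : ℂ → E := fun z => F (s + z * (t - s))
  have hG : ∀ z : ℂ, ‖G z‖ = ‖F ↑(s + z.re * (t - s))‖ := fun z => by
    simp [G, hre (s + z * (t - s))]
  have hbdd : BddAbove ((norm ∘ G) '' verticalClosedStrip 0 1) := by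
    obtain ⟨C, hC⟩ := (isCompact_Icc.image
      (f := fun x : ℝ => ‖F ↑(s + x * (t - s))‖) (by have := hF.continuous; fun_prop)).bddAbove
    exact ⟨C, by rintro _ ⟨z, hz, rfl⟩; exact hC ⟨z.re, hz, (hG z).symm⟩⟩
  have h := norm_le_interp_of_mem_verticalClosedStrip₀₁' G (z := b) (a := ‖F s‖) (b := ‖F t‖)
    ⟨hb₀, hb₁⟩ (hF.comp (by fun_prop)).diffContOnCl hbdd
    (fun z (hz : z.re = 0) => by simp [hG, hz]) (fun z (hz : z.re = 1) => by simp [hG, hz])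
  rw [ofReal_re] at h
  convert h using 3
  push_cast
  ring

theorem convexOn_log_norm_of_norm_eq_norm_re {F : ℂ → E} (hF : Differentiable ℂ F)
    (hre : ∀ z : ℂ, ‖F z‖ = ‖F z.re‖) (hF₀ : ∀ x : ℝ, F x ≠ 0) :
    ConvexOn ℝ univ (fun t : ℝ => Real.log ‖F t‖) := by
  refine ⟨convex_univ, fun s _ t _ a b _ hb hab => ?_⟩
  obtain rfl : a = 1 - b := by linarith
  have hpos (x : ℝ) : 0 < ‖F x‖ := norm_pos_iff.2 (hF₀ x)
  calc Real.log ‖F ↑((1 - b) • s + b • t)‖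
      ≤ Real.log (‖F s‖ ^ (1 - b) * ‖F t‖ ^ b) :=
        Real.log_le_log (hpos _)
          (norm_le_rpow_mul_rpow_of_norm_eq_norm_re hF hre s t hb (by linarith))
    _ = (1 - b) • Real.log ‖F s‖ + b • Real.log ‖F t‖ := by
        rw [Real.log_mul (Real.rpow_pos_of_pos (hpos s) _).ne'
            (Real.rpow_pos_of_pos (hpos t) _).ne', Real.log_rpow (hpos s), Real.log_rpow (hpos t),
          smul_eq_mul, smul_eq_mul]

end ThreeLines

theorem ContinuousLinearMap.differentiable_apply₂_exp_smul {𝔸 𝔹 V : Type*} [NormedRing 𝔸]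
    [NormedAlgebra ℂ 𝔸] [CompleteSpace 𝔸] [NormedRing 𝔹] [NormedAlgebra ℂ 𝔹] [CompleteSpace 𝔹]
    [NormedAddCommGroup V] [NormedSpace ℂ V] (Ψ : 𝔸 →L[ℂ] 𝔹 →L[ℂ] V) (a : 𝔸) (b : 𝔹) :
    Differentiable ℂ fun z : ℂ => Ψ (exp (z • a)) (exp (z • b)) :=
  (Ψ.differentiable.comp fun z => (hasDerivAt_exp_smul_const a z).differentiableAt).clm_apply
    fun z => (hasDerivAt_exp_smul_const b z).differentiableAt

namespace Matrix

variable {ι κ : Type*} [Fintype ι] [DecidableEq ι] [Fintype κ] [DecidableEq κ]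

theorem exp_add_smul (H : Matrix ι ι ℂ) (a b : ℂ) :
    exp ((a + b) • H) = exp (a • H) * exp (b • H) := by
  rw [add_smul, exp_add_of_commute _ _ (((Commute.refl H).smul_left a).smul_right b)]

theorem exp_real_mul_I_smul_mem_unitaryGroup {H : Matrix ι ι ℂ} (hH : H.IsHermitian) (y : ℝ) :
    exp (((y : ℂ) * I) • H) ∈ unitaryGroup ι ℂ := by
  set X := ((y : ℂ) * I) • H
  have hX : star X = -X :=
    hH.isSelfAdjoint.smul_mem_skewAdjoint (by simp [skewAdjoint.mem_iff])
  rw [mem_unitaryGroup_iff, star_eq_conjTranspose, ← exp_conjTranspose, ← star_eq_conjTranspose,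
    hX, ← exp_add_of_commute _ _ (Commute.refl X).neg_right, add_neg_cancel, NormedSpace.exp_zero]

theorem exp_mul_mul_exp_eq_zero_iff (A : Matrix ι ι ℂ) (B : Matrix ι κ ℂ) (C : Matrix κ κ ℂ) :
    exp A * B * exp C = 0 ↔ B = 0 := by
  let _ := (isUnit_exp A).invertible
  let _ := (isUnit_exp C).invertible
  refine ⟨fun h => ?_, by rintro rfl; simp⟩
  apply mul_right_injective_of_invertible (exp A)
  apply mul_left_injective_of_invertible (exp C)
  simpa using h

theorem differentiable_exp_smul_mul_mul_exp_smul {V : Type*} [NormedAddCommGroup V]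
    [NormedSpace ℂ V] (e : Matrix ι κ ℂ →ₗ[ℂ] V) (H₁ : Matrix ι ι ℂ) (B : Matrix ι κ ℂ)
    (H₂ : Matrix κ κ ℂ) :
    Differentiable ℂ fun z : ℂ => e (exp (z • H₁) * B * exp (z • H₂)) := by
  -- `Matrix` has no normed-ring instance; any submultiplicative norm serves to differentiate `exp`.
  let _ : NormedRing (Matrix ι ι ℂ) := Matrix.linftyOpNormedRing
  let _ : NormedAlgebra ℂ (Matrix ι ι ℂ) := Matrix.linftyOpNormedAlgebra
  let _ : NormedRing (Matrix κ κ ℂ) := Matrix.linftyOpNormedRing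
  let _ : NormedAlgebra ℂ (Matrix κ κ ℂ) := Matrix.linftyOpNormedAlgebra
  let Φ : Matrix ι ι ℂ →ₗ[ℂ] Matrix κ κ ℂ →ₗ[ℂ] V := LinearMap.mk₂ ℂ (fun X Y => e (X * B * Y))
    (by simp [Matrix.add_mul]) (by simp [Matrix.smul_mul])
    (by simp [Matrix.mul_add]) (by simp [Matrix.mul_smul])
  exact ContinuousLinearMap.differentiable_apply₂_exp_smul (𝔸 := Matrix ι ι ℂ) (𝔹 := Matrix κ κ ℂ)
    Φ.toContinuousBilinearMap H₁ H₂

end Matrix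

/-- `m × n` complex matrices with `N` as their norm: a type synonym, because `Matrix` already
carries the product topology. -/
def NormedMatrix (m n : ℕ) (_N : Matrix (Fin m) (Fin n) ℂ → ℝ) : Type :=
  Matrix (Fin m) (Fin n) ℂ

namespace NormedMatrix

variable {m n : ℕ} {N : Matrix (Fin m) (Fin n) ℂ → ℝ}

instance : AddCommGroup (NormedMatrix m n N) :=
  inferInstanceAs (AddCommGroup (Matrix (Fin m) (Fin n) ℂ))

instance : Module ℂ (NormedMatrix m n N) :=
  inferInstanceAs (Module ℂ (Matrix (Fin m) (Fin n) ℂ))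

instance : Norm (NormedMatrix m n N) := ⟨N⟩

end NormedMatrix

namespace IsUnitarilyInvariantNorm

variable {m n : ℕ} {N : Matrix (Fin m) (Fin n) ℂ → ℝ}

theorem apply_neg (hN : IsUnitarilyInvariantNorm m n N) (A : Matrix (Fin m) (Fin n) ℂ) :
    N (-A) = N A := by
  simpa using hN.smul (-1) A

theorem nonneg (hN : IsUnitarilyInvariantNorm m n N) (A : Matrix (Fin m) (Fin n) ℂ) :
    0 ≤ N A := by
  have := hN.triangle A (-A)
  rw [add_neg_cancel, (hN.eq_zero_iff 0).2 rfl, hN.apply_neg] at this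
  linarith

theorem normedSpaceCore (hN : IsUnitarilyInvariantNorm m n N) :
    NormedSpace.Core ℂ (NormedMatrix m n N) where
  norm_nonneg := hN.nonneg
  norm_smul := hN.smul
  norm_triangle := hN.triangle
  norm_eq_zero_iff := hN.eq_zero_iff

theorem apply_exp_smul_mul_mul_exp_smul (hN : IsUnitarilyInvariantNorm m n N)
    {H₁ : Matrix (Fin m) (Fin m) ℂ} {H₂ : Matrix (Fin n) (Fin n) ℂ} (hH₁ : H₁.IsHermitian)
    (hH₂ : H₂.IsHermitian) (B : Matrix (Fin m) (Fin n) ℂ) (z : ℂ) :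
    N (exp (z • H₁) * B * exp (z • H₂)) =
      N (exp ((z.re : ℂ) • H₁) * B * exp ((z.re : ℂ) • H₂)) := by
  have e₁ : exp (z • H₁) = exp (((z.im : ℂ) * I) • H₁) * exp ((z.re : ℂ) • H₁) := by
    rw [← Matrix.exp_add_smul, add_comm, re_add_im]
  have e₂ : exp (z • H₂) = exp ((z.re : ℂ) • H₂) * exp (((z.im : ℂ) * I) • H₂) := by
    rw [← Matrix.exp_add_smul, re_add_im]
  rw [e₁, e₂, ← hN.unitary_inv _ _ (Matrix.exp_real_mul_I_smul_mem_unitaryGroup hH₁ z.im)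
    (Matrix.exp_real_mul_I_smul_mem_unitaryGroup hH₂ z.im)
    (exp ((z.re : ℂ) • H₁) * B * exp ((z.re : ℂ) • H₂))]
  simp only [Matrix.mul_assoc]

end IsUnitarilyInvariantNorm

/-- For a nonzero matrix `B`, a unitarily invariant norm `‖·‖`, and Hermitian matrices
`H₁, H₂`, the function `h(t) = log ‖e^{tH₁} B e^{tH₂}‖` is convex on `ℝ`. -/
theorem log_norm_exp_convex (m n : ℕ) (B : Matrix (Fin m) (Fin n) ℂ) (hB : B ≠ 0)
    (N : Matrix (Fin m) (Fin n) ℂ → ℝ) (hN : IsUnitarilyInvariantNorm m n N)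
    (H₁ : Matrix (Fin m) (Fin m) ℂ) (H₂ : Matrix (Fin n) (Fin n) ℂ)
    (hH₁ : H₁.IsHermitian) (hH₂ : H₂.IsHermitian) :
    ConvexOn ℝ Set.univ (fun t : ℝ =>
      Real.log (N (mexp ((t : ℂ) • H₁) * B * mexp ((t : ℂ) • H₂)))) := by
  let _ := NormedAddCommGroup.ofCore hN.normedSpaceCore
  let _ := NormedSpace.ofCore hN.normedSpaceCore
  let F : ℂ → NormedMatrix m n N := fun z => exp (z • H₁) * B * exp (z • H₂)
  have hF : Differentiable ℂ F :=
    Matrix.differentiable_exp_smul_mul_mul_exp_smul (V := NormedMatrix m n N) LinearMap.id H₁ B H₂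
  exact convexOn_log_norm_of_norm_eq_norm_re hF
    (hN.apply_exp_smul_mul_mul_exp_smul hH₁ hH₂ B)
    (fun x => (Matrix.exp_mul_mul_exp_eq_zero_iff _ B _).not.2 hB)
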